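/- arXiv:2009.10833 — 2 statements merged into one kernel-verified Lean document; each statement's English description precedes it below -/
import Mathlib

section
/- Suppose a real polynomial $f(x) = \sum_{\alpha} c_{\alpha} x^{\alpha}$ has a zero of order $n > 0$ at $x_0$. Then for any polynomial $p \in \mathbb{R}[x]$ of degree $d < n$, we have $\sum_{\alpha} c_{\alpha} p(\alpha) x_0^{\alpha} = 0$. -/
/-!
With the Euler operator `θ = X · d/dX` one has `θ (X ^ α) = α • X ^ α`, so
`∑ c_α α ^ k x₀ ^ α` is the value of `θ^[k] f` at `x₀`. Each application of `θ` lowers the order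
of the zero at `x₀` by at most one, so for `k < n` the polynomial `θ^[k] f` still vanishes at `x₀`.
Expanding `p` in monomials of degree `< n` gives the theorem.
-/

open Polynomial

namespace Polynomial

variable {R : Type*}

noncomputable def eulerOperator [Semiring R] (g : R[X]) : R[X] := X * derivative g

section CommSemiring

variable [CommSemiring R]

theorem coeff_eulerOperator (g : R[X]) (α : ℕ) :
    (eulerOperator g).coeff α = α * g.coeff α := by
  cases α with
  | zero => simp [eulerOperator]
  | succ α =>
    rw [eulerOperator, coeff_X_mul, coeff_derivative]
    push_cast
    ring

theorem coeff_iterate_eulerOperator (g : R[X]) (k α : ℕ) :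
    (eulerOperator^[k] g).coeff α = α ^ k * g.coeff α := by
  induction k with
  | zero => simp
  | succ k ih => rw [Function.iterate_succ_apply', coeff_eulerOperator, ih]; ring

theorem support_iterate_eulerOperator_subset (g : R[X]) (k : ℕ) :
    (eulerOperator^[k] g).support ⊆ g.support := fun α hα => by
  rw [mem_support_iff, coeff_iterate_eulerOperator] at hα
  exact mem_support_iff.mpr (right_ne_zero_of_mul hα)

theorem eval_iterate_eulerOperator (g : R[X]) (k : ℕ) (x : R) :
    (eulerOperator^[k] g).eval x = ∑ α ∈ g.support, g.coeff α * α ^ k * x ^ α := by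
  rw [eval_eq_sum, sum_eq_of_subset _ (by simp) (support_iterate_eulerOperator_subset g k)]
  refine Finset.sum_congr rfl fun α _ => ?_
  rw [coeff_iterate_eulerOperator]
  ring

theorem pow_sub_dvd_iterate_eulerOperator_of_pow_dvd {q g : R[X]} {n : ℕ} (k : ℕ)
    (dvd : q ^ n ∣ g) : q ^ (n - k) ∣ eulerOperator^[k] g := by
  induction k with
  | zero => simpa
  | succ k ih =>
    rw [Nat.sub_succ, Function.iterate_succ_apply']
    exact (pow_sub_one_dvd_derivative_of_pow_dvd ih).mul_left X

end CommSemiring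

theorem sum_coeff_mul_pow_mul_pow_eq_zero [CommRing R] {f : R[X]} {x₀ : R} {n k : ℕ}
    (hzero : (X - C x₀) ^ n ∣ f) (hk : k < n) :
    ∑ α ∈ f.support, f.coeff α * α ^ k * x₀ ^ α = 0 := by
  have hdvd : X - C x₀ ∣ eulerOperator^[k] f :=
    (dvd_pow_self _ (Nat.sub_ne_zero_of_lt hk)).trans
      (pow_sub_dvd_iterate_eulerOperator_of_pow_dvd k hzero)
  rw [← eval_iterate_eulerOperator]
  exact dvd_iff_isRoot.mp hdvd

end Polynomial

theorem stmt3_general (f : Polynomial ℝ) (x0 : ℝ) (n : ℕ)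
    (hzero : (Polynomial.X - Polynomial.C x0) ^ n ∣ f)
    (p : Polynomial ℝ) (hp : p.degree < n) :
    ∑ α ∈ f.support, f.coeff α * p.eval (α : ℝ) * x0 ^ α = 0 := by
  have hmonomial : ∀ k ∈ p.support,
      ∑ α ∈ f.support, f.coeff α * (α : ℝ) ^ k * x0 ^ α = 0 := fun k hk =>
    sum_coeff_mul_pow_mul_pow_eq_zero hzero <| by
      exact_mod_cast (le_degree_of_ne_zero (mem_support_iff.mp hk)).trans_lt hp
  calc ∑ α ∈ f.support, f.coeff α * p.eval (α : ℝ) * x0 ^ α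
      = ∑ k ∈ p.support, p.coeff k *
          ∑ α ∈ f.support, f.coeff α * (α : ℝ) ^ k * x0 ^ α := by
        simp only [eval_eq_sum, sum_def, Finset.mul_sum, Finset.sum_mul]
        rw [Finset.sum_comm]
        refine Finset.sum_congr rfl fun k _ => Finset.sum_congr rfl fun α _ => ?_
        ring
    _ = 0 := Finset.sum_eq_zero fun k hk => by rw [hmonomial k hk, mul_zero]

theorem stmt3 (f : Polynomial ℝ) (x0 : ℝ) (n : ℕ) (hn : 0 < n)
    (hzero : (Polynomial.X - Polynomial.C x0) ^ n ∣ f)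
    (p : Polynomial ℝ) (hp : p.degree < n) :
    ∑ α ∈ f.support, f.coeff α * p.eval (α : ℝ) * x0 ^ α = 0 :=
  stmt3_general f x0 n hzero p hp
end

section
/- Let $H, P$ be $N \times N$ Hermitian matrices with eigenvalues arranged in increasing order. Then for integers $1 \leq j, k \leq N$ with $j + k \geq N + 1$, $\lambda_{j+k-N}(H+P) \leq \lambda_j(H) + \lambda_k(P)$, and for $1 \leq j, k \leq N$ with $j + k \leq N + 1$, $\lambda_j(H) + \lambda_k(P) \leq \lambda_{j+k-1}(H+P)$. -/
/-!
Let `U`, `V` be spanned by the eigenvectors of `H`, `P` with eigenvalues at least `λ_j(H)`, `λ_k(P)`,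
and `W` by the eigenvectors of `H + P` with eigenvalues at most `λ_{j+k-1}(H + P)`. Their dimensions
add up to more than `2N`, so they share a unit vector `x`, and at `x` the Rayleigh quotients give
`λ_j(H) + λ_k(P) ≤ ⟪x, (H + P) x⟫ ≤ λ_{j+k-1}(H + P)`. The other inequality is the same statement
for `-H` and `-P`, whose eigenvalues in increasing order are those of `H` and `P` negated and reversed.
-/

open scoped InnerProductSpace
open Module Submodule Finset RCLike

namespace OrthonormalBasis

variable {𝕜 E ι : Type*} [RCLike 𝕜] [NormedAddCommGroup E] [InnerProductSpace 𝕜 E] [Fintype ι]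
  (b : OrthonormalBasis ι 𝕜 E) {T : E →ₗ[𝕜] E} {μ : ι → ℝ}

lemma inner_map_eq_mul_inner (hT : ∀ i, T (b i) = (μ i : 𝕜) • b i) (i : ι) (x : E) :
    ⟪b i, T x⟫_𝕜 = μ i * ⟪b i, x⟫_𝕜 := by
  conv_lhs => rw [← b.sum_repr' x]
  simp only [map_sum, map_smul, hT, smul_smul, b.orthonormal.inner_right_fintype, mul_comm]

lemma re_inner_map_self_eq_sum (hT : ∀ i, T (b i) = (μ i : 𝕜) • b i) (x : E) :
    re ⟪x, T x⟫_𝕜 = ∑ i, μ i * ‖⟪b i, x⟫_𝕜‖ ^ 2 := by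
  rw [← b.sum_inner_mul_inner, map_sum]
  refine Finset.sum_congr rfl fun i _ => ?_
  rw [b.inner_map_eq_mul_inner hT, mul_left_comm, re_ofReal_mul, ← inner_conj_symm,
    RCLike.conj_mul, ← ofReal_pow, ofReal_re]

lemma inner_eq_zero_of_mem_span_image {s : Set ι} {x : E} (hx : x ∈ span 𝕜 (b '' s)) {i : ι}
    (hi : i ∉ s) : ⟪b i, x⟫_𝕜 = 0 := by
  refine mem_orthogonal_singleton_iff_inner_right.mp (span_le.mpr ?_ hx)
  rintro _ ⟨j, hj, rfl⟩
  refine mem_orthogonal_singleton_iff_inner_right.mpr (b.orthonormal.inner_eq_zero ?_)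
  rintro rfl
  exact hi hj

lemma finrank_span_image (s : Finset ι) : finrank 𝕜 (span 𝕜 (b '' s)) = #s := by
  rw [Set.image_eq_range]
  exact (finrank_span_eq_card (b.orthonormal.linearIndependent.comp _ Subtype.val_injective)).trans
    (Fintype.card_coe s)

lemma mul_norm_sq_le_re_inner_map_self (hT : ∀ i, T (b i) = (μ i : 𝕜) • b i) {s : Set ι}
    {c : ℝ} (hc : ∀ i ∈ s, c ≤ μ i) {x : E} (hx : x ∈ span 𝕜 (b '' s)) :
    c * ‖x‖ ^ 2 ≤ re ⟪x, T x⟫_𝕜 := by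
  rw [b.re_inner_map_self_eq_sum hT, ← b.sum_sq_norm_inner_right, Finset.mul_sum]
  refine Finset.sum_le_sum fun i _ => ?_
  by_cases hi : i ∈ s
  · exact mul_le_mul_of_nonneg_right (hc i hi) (sq_nonneg _)
  · simp [b.inner_eq_zero_of_mem_span_image hx hi]

lemma re_inner_map_self_le_mul_norm_sq (hT : ∀ i, T (b i) = (μ i : 𝕜) • b i) {s : Set ι}
    {c : ℝ} (hc : ∀ i ∈ s, μ i ≤ c) {x : E} (hx : x ∈ span 𝕜 (b '' s)) :
    re ⟪x, T x⟫_𝕜 ≤ c * ‖x‖ ^ 2 := by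
  have hT' : ∀ i, (-T) (b i) = ((-μ i : ℝ) : 𝕜) • b i := by simp [hT, neg_smul]
  have := b.mul_norm_sq_le_re_inner_map_self hT' (c := -c) (fun i hi => neg_le_neg (hc i hi)) hx
  simpa [inner_neg_right] using this

lemma neg_apply_reindex_revPerm {n : ℕ} {b : OrthonormalBasis (Fin n) 𝕜 E} {μ : Fin n → ℝ}
    (hT : ∀ i, T (b i) = (μ i : 𝕜) • b i) (i : Fin n) :
    (-T) (b.reindex Fin.revPerm i) = ((-μ i.rev : ℝ) : 𝕜) • b.reindex Fin.revPerm i := by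
  simp [hT, neg_smul]

end OrthonormalBasis

theorem Submodule.exists_mem_inf_inf_ne_zero {K V : Type*} [DivisionRing K] [AddCommGroup V]
    [Module K V] [FiniteDimensional K V] (U₁ U₂ U₃ : Submodule K V)
    (h : 2 * finrank K V < finrank K U₁ + finrank K U₂ + finrank K U₃) :
    ∃ x ∈ U₁ ⊓ U₂ ⊓ U₃, x ≠ 0 := by
  have h₁₂ := finrank_sup_add_finrank_inf_eq U₁ U₂
  have h₁₂₃ := finrank_sup_add_finrank_inf_eq (U₁ ⊓ U₂) U₃
  have := finrank_le (U₁ ⊔ U₂)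
  have := finrank_le (U₁ ⊓ U₂ ⊔ U₃)
  refine (Submodule.ne_bot_iff _).mp fun h₀ => ?_
  rw [h₀, finrank_bot] at h₁₂₃
  omega

section Weyl

variable {𝕜 E : Type*} [RCLike 𝕜] [NormedAddCommGroup E] [InnerProductSpace 𝕜 E]
  [FiniteDimensional 𝕜 E] {A B : E →ₗ[𝕜] E}

theorem add_le_of_forall_mem_le_re_inner {U V W : Submodule 𝕜 E}
    (hdim : 2 * finrank 𝕜 E < finrank 𝕜 U + finrank 𝕜 V + finrank 𝕜 W) {a b c : ℝ}
    (hA : ∀ x ∈ U, a * ‖x‖ ^ 2 ≤ re ⟪x, A x⟫_𝕜) (hB : ∀ x ∈ V, b * ‖x‖ ^ 2 ≤ re ⟪x, B x⟫_𝕜)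
    (hAB : ∀ x ∈ W, re ⟪x, (A + B) x⟫_𝕜 ≤ c * ‖x‖ ^ 2) :
    a + b ≤ c := by
  obtain ⟨x, ⟨⟨hxU, hxV⟩, hxW⟩, hx₀⟩ := exists_mem_inf_inf_ne_zero U V W hdim
  have hsplit : re ⟪x, (A + B) x⟫_𝕜 = re ⟪x, A x⟫_𝕜 + re ⟪x, B x⟫_𝕜 := by
    rw [LinearMap.add_apply, inner_add_right, map_add]
  refine le_of_mul_le_mul_right ?_ (pow_pos (norm_pos_iff.mpr hx₀) 2)
  linarith [hA x hxU, hB x hxV, hAB x hxW]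

variable {n : ℕ} {bA bB bAB : OrthonormalBasis (Fin n) 𝕜 E} {μA μB μAB : Fin n → ℝ}

theorem add_le_eigenvalue_of_orthonormalBasis (hA : ∀ i, A (bA i) = (μA i : 𝕜) • bA i)
    (hB : ∀ i, B (bB i) = (μB i : 𝕜) • bB i) (hAB : ∀ i, (A + B) (bAB i) = (μAB i : 𝕜) • bAB i)
    (hμA : Monotone μA) (hμB : Monotone μB) (hμAB : Monotone μAB) {i j k : Fin n}
    (hk : (i : ℕ) + j ≤ k) :
    μA i + μB j ≤ μAB k := by
  refine add_le_of_forall_mem_le_re_inner (U := span 𝕜 (bA '' ↑(Finset.Ici i)))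
    (V := span 𝕜 (bB '' ↑(Finset.Ici j))) (W := span 𝕜 (bAB '' ↑(Finset.Iic k))) ?_
    (fun _ => bA.mul_norm_sq_le_re_inner_map_self hA fun _ h => hμA (Finset.mem_Ici.mp h))
    (fun _ => bB.mul_norm_sq_le_re_inner_map_self hB fun _ h => hμB (Finset.mem_Ici.mp h))
    (fun _ => bAB.re_inner_map_self_le_mul_norm_sq hAB fun _ h => hμAB (Finset.mem_Iic.mp h))
  rw [bA.finrank_span_image, bB.finrank_span_image, bAB.finrank_span_image, Fin.card_Ici,
    Fin.card_Ici, Fin.card_Iic, finrank_eq_card_basis bA.toBasis, Fintype.card_fin]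
  omega

theorem eigenvalue_le_add_of_orthonormalBasis (hA : ∀ i, A (bA i) = (μA i : 𝕜) • bA i)
    (hB : ∀ i, B (bB i) = (μB i : 𝕜) • bB i) (hAB : ∀ i, (A + B) (bAB i) = (μAB i : 𝕜) • bAB i)
    (hμA : Monotone μA) (hμB : Monotone μB) (hμAB : Monotone μAB) {i j k : Fin n}
    (hk : (k : ℕ) + n ≤ i + j + 1) :
    μAB k ≤ μA i + μB j := by
  have hAB' := OrthonormalBasis.neg_apply_reindex_revPerm hAB
  rw [neg_add] at hAB'
  have := add_le_eigenvalue_of_orthonormalBasis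
    (OrthonormalBasis.neg_apply_reindex_revPerm hA) (OrthonormalBasis.neg_apply_reindex_revPerm hB)
    hAB' (fun _ _ h => neg_le_neg (hμA (Fin.rev_le_rev.mpr h)))
    (fun _ _ h => neg_le_neg (hμB (Fin.rev_le_rev.mpr h)))
    (fun _ _ h => neg_le_neg (hμAB (Fin.rev_le_rev.mpr h))) (i := i.rev) (j := j.rev) (k := k.rev)
    (by simp only [Fin.val_rev]; omega)
  simp only [Fin.rev_rev] at this
  linarith

end Weyl

lemma Matrix.IsHermitian.toEuclideanLin_eigenvectorBasis_reindex {𝕜 n : Type*} [RCLike 𝕜]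
    [Fintype n] [DecidableEq n] {A : Matrix n n 𝕜} (hA : A.IsHermitian) (σ : Equiv.Perm n)
    (i : n) :
    toEuclideanLin A (hA.eigenvectorBasis.reindex σ.symm i) =
      ((hA.eigenvalues ∘ σ) i : 𝕜) • hA.eigenvectorBasis.reindex σ.symm i := by
  rw [OrthonormalBasis.reindex_apply, Equiv.symm_symm, Matrix.toLpLin_apply,
    hA.mulVec_eigenvectorBasis, ← RCLike.real_smul_eq_coe_smul (K := 𝕜)]
  rfl

theorem stmt8 (N : ℕ) (H P : Matrix (Fin N) (Fin N) ℂ)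
    (hH : H.IsHermitian) (hP : P.IsHermitian) (hHP : (H + P).IsHermitian)
    (μH μP μHP : Fin N → ℝ)
    (hμH : Monotone μH) (hμP : Monotone μP) (hμHP : Monotone μHP)
    (hpermH : ∃ σ : Equiv.Perm (Fin N), μH = hH.eigenvalues ∘ σ)
    (hpermP : ∃ σ : Equiv.Perm (Fin N), μP = hP.eigenvalues ∘ σ)
    (hpermHP : ∃ σ : Equiv.Perm (Fin N), μHP = hHP.eigenvalues ∘ σ)
    (j k : ℕ) (hj1 : 1 ≤ j) (hjN : j ≤ N) (hk1 : 1 ≤ k) (hkN : k ≤ N) :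
    (∀ _h : N + 1 ≤ j + k,
        μHP ⟨j + k - N - 1, by omega⟩ ≤ μH ⟨j - 1, by omega⟩ + μP ⟨k - 1, by omega⟩) ∧
    (∀ _h : j + k ≤ N + 1,
        μH ⟨j - 1, by omega⟩ + μP ⟨k - 1, by omega⟩ ≤ μHP ⟨j + k - 1 - 1, by omega⟩) := by
  obtain ⟨σH, rfl⟩ := hpermH
  obtain ⟨σP, rfl⟩ := hpermP
  obtain ⟨σHP, rfl⟩ := hpermHP
  have hHP' := hHP.toEuclideanLin_eigenvectorBasis_reindex σHP
  rw [map_add] at hHP'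
  have hH' := hH.toEuclideanLin_eigenvectorBasis_reindex σH
  have hP' := hP.toEuclideanLin_eigenvectorBasis_reindex σP
  exact ⟨fun _ => eigenvalue_le_add_of_orthonormalBasis hH' hP' hHP' hμH hμP hμHP
      (by simp only; omega),
    fun _ => add_le_eigenvalue_of_orthonormalBasis hH' hP' hHP' hμH hμP hμHP
      (by simp only; omega)⟩
end
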